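/- arXiv:2410.12305 — 2 statements merged into one kernel-verified Lean document; each statement's English description precedes it below -/
import Mathlib

section
/- Let X ≥ 1, R ≥ 1, 0 < a < b, j ≥ 1 an integer, and let φ be a smooth function compactly supported in [aX, bX] with ∫ |φ^{(j)}(ξ)| dξ ≤ (X/R)^{1−j}. Let φ̃(s) = ∫_0^∞ φ(u) u^{s−1} du denote the Mellin transform. Then for every fixed σ > j − 1 there is a constant C = C(j, σ, a, b) such that for all τ ∈ ℝ, writing s = σ + iτ, one has |φ̃(−s)| ≤ C · X^{−σ} R^{j−1} (1 + |τ|)^{−j}. -/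
open Complex MeasureTheory
open scoped ContDiff

noncomputable section

namespace Stmt8Aux

lemma vanish_deriv {g : ℝ → ℂ} {c d : ℝ} (hsupp : ∀ y ∉ Set.Icc c d, g y = 0) :
    ∀ y ∉ Set.Icc c d, deriv g y = 0 := by
  intro y hy
  have h1 : g =ᶠ[nhds y] (fun _ => 0) := by
    have : (Set.Icc c d)ᶜ ∈ nhds y := (isClosed_Icc.isOpen_compl).mem_nhds hy
    filter_upwards [this] with t ht using hsupp t ht
  rw [h1.deriv_eq, deriv_const]

lemma vanish_iteratedDeriv {g : ℝ → ℂ} {c d : ℝ} (hsupp : ∀ y ∉ Set.Icc c d, g y = 0) (n : ℕ) :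
    ∀ y ∉ Set.Icc c d, iteratedDeriv n g y = 0 := by
  induction n with
  | zero => simpa using hsupp
  | succ n ih =>
    intro y hy
    rw [iteratedDeriv_succ]
    exact vanish_deriv ih y hy

lemma integral_Ioi_eq_intervalIntegral {h : ℝ → ℂ} {c d : ℝ} (hc : 0 < c) (hcd : c ≤ d)
    (hsupp : ∀ y ∉ Set.Icc c d, h y = 0) (F : ℝ → ℂ)
    (hF : ∀ t, h t = 0 → F t = 0) :
    ∫ t in Set.Ioi (0:ℝ), F t = ∫ t in (c/2)..(d+1), F t := by
  have hvan : ∀ t, t ∉ Set.Icc c d → F t = 0 := fun t ht => hF t (hsupp t ht)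
  rw [MeasureTheory.setIntegral_eq_integral_of_forall_compl_eq_zero (fun x hx => by
    refine hvan x fun hx2 => hx ?_
    exact lt_of_lt_of_le hc hx2.1)]
  rw [intervalIntegral.integral_eq_integral_of_support_subset]
  intro t ht
  rcases Classical.em (t ∈ Set.Icc c d) with h1 | h1
  · constructor
    · linarith [h1.1]
    · linarith [h1.2]
  · exact absurd (hvan t h1) ht

lemma ibp {g : ℝ → ℂ} (hg : ContDiff ℝ ∞ g) {c d : ℝ} (hc : 0 < c) (hcd : c ≤ d)
    (hsupp : ∀ y ∉ Set.Icc c d, g y = 0) {z : ℂ} (hz : z ≠ 0) :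
    ∫ t in Set.Ioi (0:ℝ), (t:ℂ)^z * deriv g t
      = -z * ∫ t in Set.Ioi (0:ℝ), (t:ℂ)^(z-1) * g t := by
  have hsupp' := vanish_deriv hsupp
  have h1 : ∫ t in Set.Ioi (0:ℝ), (t:ℂ)^z * deriv g t
      = ∫ t in (c/2)..(d+1), (t:ℂ)^z * deriv g t :=
    integral_Ioi_eq_intervalIntegral hc hcd hsupp' _ (fun t ht => by rw [ht, mul_zero])
  have h2 : ∫ t in Set.Ioi (0:ℝ), (t:ℂ)^(z-1) * g t
      = ∫ t in (c/2)..(d+1), (t:ℂ)^(z-1) * g t :=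
    integral_Ioi_eq_intervalIntegral hc hcd hsupp _ (fun t ht => by rw [ht, mul_zero])
  rw [h1, h2]
  have hle : c/2 ≤ d+1 := by linarith
  have hmem : ∀ x ∈ Set.uIcc (c/2) (d+1), (0:ℝ) < x := by
    intro x hx
    rw [Set.uIcc_of_le hle] at hx
    linarith [hx.1]
  have hU : ∀ x ∈ Set.uIcc (c/2) (d+1),
      HasDerivAt (fun t : ℝ => (t:ℂ)^z) (z * (x:ℂ)^(z-1)) x := by
    intro x hx
    have hx0 : x ≠ 0 := (hmem x hx).ne'
    have := (hasDerivAt_ofReal_cpow_const' hx0 (r := z - 1)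
      (by intro h; exact hz (by linear_combination h))).const_mul z
    simp only [sub_add_cancel] at this
    refine this.congr_of_eventuallyEq (Filter.Eventually.of_forall fun y => ?_)
    field_simp
  have hV : ∀ x ∈ Set.uIcc (c/2) (d+1), HasDerivAt g (deriv g x) x := fun x _ =>
    ((hg.differentiable (by norm_num)) x).hasDerivAt
  have hU' : IntervalIntegrable (fun x : ℝ => z * (x:ℂ)^(z-1)) volume (c/2) (d+1) := by
    apply ContinuousOn.intervalIntegrable
    exact continuousOn_const.mul (fun x hx =>
      (Complex.continuousAt_ofReal_cpow_const x (z-1) (Or.inr (hmem x hx).ne')).continuousWithinAt)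
  have hV' : IntervalIntegrable (deriv g) volume (c/2) (d+1) :=
    (hg.continuous_deriv (by norm_num)).intervalIntegrable _ _
  rw [intervalIntegral.integral_mul_deriv_eq_deriv_mul hU hV hU' hV']
  have hga : g (c/2) = 0 := hsupp _ (fun hmem2 => by linarith [hmem2.1])
  have hgb : g (d+1) = 0 := hsupp _ (fun hmem2 => by linarith [hmem2.2])
  rw [hga, hgb]
  rw [intervalIntegral.integral_congr (g := fun x => z * ((x:ℂ)^(z-1) * g x)) (fun x _ => by ring)]
  rw [intervalIntegral.integral_const_mul]
  ring


lemma mellin_iter {φ : ℝ → ℂ} (hφ : ContDiff ℝ ∞ φ) {c d : ℝ} (hc : 0 < c) (hcd : c ≤ d)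
    (hsupp : ∀ y ∉ Set.Icc c d, φ y = 0) (s : ℂ) (n : ℕ)
    (hs : ∀ k : ℕ, k < n → s + k ≠ 0) :
    mellin (iteratedDeriv n φ) (s + n) =
      (-1)^n * (∏ k ∈ Finset.range n, (s + k)) * mellin φ s := by
  induction n with
  | zero => simp
  | succ n ih =>
    have hsmooth : ContDiff ℝ ∞ (iteratedDeriv n φ) := by
      simpa [iteratedDeriv_eq_iterate] using hφ.iterate_deriv n
    have hstep : mellin (iteratedDeriv (n+1) φ) (s + ((n:ℂ)+1))
        = -(s + n) * mellin (iteratedDeriv n φ) (s + n) := by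
      have hz : s + (n:ℂ) ≠ 0 := hs n (Nat.lt_succ_self n)
      have h0 := ibp hsmooth hc hcd (vanish_iteratedDeriv hsupp n) hz
      simp only [mellin, smul_eq_mul, iteratedDeriv_succ]
      rw [show s + ((n:ℂ)+1) - 1 = s + n by ring]
      rw [h0]
    push_cast
    rw [hstep, ih (fun k hk => hs k (Nat.lt_succ_of_lt hk)), Finset.prod_range_succ]
    ring
end Stmt8Aux

open Stmt8Aux in
/-- **A bound for the Mellin transform of a flat test function.** -/
theorem statement8 (j : ℕ) (hj : 1 ≤ j) (σ : ℝ) (hσ : σ > (j : ℝ) - 1)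
    (a b : ℝ) (ha : 0 < a) (hab : a < b) :
    ∃ C : ℝ, 0 < C ∧
      ∀ X R : ℝ, 1 ≤ X → 1 ≤ R →
      ∀ φ : ℝ → ℂ, ContDiff ℝ (⊤ : ℕ∞) φ →
        (∀ y : ℝ, y ∉ Set.Icc (a * X) (b * X) → φ y = 0) →
        (∫ ξ : ℝ, ‖iteratedDeriv j φ ξ‖ ≤ (X / R) ^ (1 - (j : ℝ))) →
      ∀ τ : ℝ,
        ‖mellin φ (-((σ : ℂ) + τ * Complex.I))‖ ≤
          C * X ^ (-σ) * R ^ ((j : ℝ) - 1) * (1 + |τ|) ^ (-(j : ℝ)) := by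
  set m : ℝ := min (σ - ((j:ℝ) - 1)) 1 with hm_def
  have hm0 : 0 < m := lt_min (by linarith) one_pos
  have hm1 : m ≤ 1 := min_le_right _ _
  set e : ℝ := (j:ℝ) - 1 - σ with he_def
  have he0 : e ≤ 0 := by simp only [he_def]; linarith
  refine ⟨a ^ e * (2/m)^j, by positivity, ?_⟩
  intro X R hX hR φ hφ hsupp hint τ
  have hX0 : (0:ℝ) < X := lt_of_lt_of_le one_pos hX
  have hR0 : (0:ℝ) < R := lt_of_lt_of_le one_pos hR
  set s : ℂ := -((σ:ℂ) + τ * Complex.I) with hs_def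
  have hc : 0 < a * X := by positivity
  have hcd : a * X ≤ b * X := by nlinarith
  have hsre : s.re = -σ := by simp [hs_def]
  have hsim : s.im = -τ := by simp [hs_def]
  have hkle : ∀ k : ℕ, k < j → (k:ℝ) ≤ (j:ℝ) - 1 := by
    intro k hk
    have : ((k:ℝ) + 1) ≤ (j:ℝ) := by exact_mod_cast Nat.succ_le_of_lt hk
    linarith
  have hs : ∀ k : ℕ, k < j → s + k ≠ 0 := by
    intro k hk h
    have h2 : (s + k).re = 0 := by rw [h]; simp
    rw [Complex.add_re, hsre, Complex.natCast_re] at h2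
    have := hkle k hk
    linarith
  have hkey := mellin_iter (hφ.of_le (by simp)) hc hcd hsupp s j hs
  have hnorm : (∏ k ∈ Finset.range j, ‖s + (k:ℂ)‖) * ‖mellin φ s‖
      = ‖mellin (iteratedDeriv j φ) (s + j)‖ := by
    rw [hkey, norm_mul, norm_mul, norm_pow, norm_neg, norm_one, one_pow, one_mul, norm_prod]
  -- bound on the mellin transform of the j-th derivative
  set f := iteratedDeriv j φ with hf_def
  have hfc : Continuous f := hφ.continuous_iteratedDeriv j (by exact_mod_cast le_top)
  have hfsupp : ∀ y ∉ Set.Icc (a*X) (b*X), f y = 0 := vanish_iteratedDeriv hsupp j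
  have hcs : HasCompactSupport f := HasCompactSupport.intro isCompact_Icc hfsupp
  have hfi : Integrable f := hfc.integrable_of_hasCompactSupport hcs
  have hre : (s + (j:ℂ) - 1).re = e := by
    simp [hs_def, he_def]; ring
  have hNbound : ‖mellin f (s + j)‖ ≤ (a*X)^e * ((X/R) ^ (1 - (j:ℝ))) := by
    rw [mellin]
    refine (norm_integral_le_integral_norm _).trans ?_
    have step1 : ∫ t in Set.Ioi (0:ℝ), ‖(t:ℂ)^(s + j - 1) • f t‖
        ≤ ∫ t in Set.Ioi (0:ℝ), (a*X)^e * ‖f t‖ := by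
      apply integral_mono_of_nonneg
      · filter_upwards with t using norm_nonneg _
      · exact (hfi.norm.const_mul _).restrict
      · filter_upwards [ae_restrict_mem measurableSet_Ioi] with t ht
        rcases eq_or_ne (f t) 0 with h0 | h0
        · simp only [h0, smul_zero, norm_zero]
          positivity
        · have htm : t ∈ Set.Icc (a*X) (b*X) := by
            by_contra hmem; exact h0 (hfsupp t hmem)
          rw [norm_smul, Complex.norm_cpow_eq_rpow_re_of_pos ht, hre]
          exact mul_le_mul_of_nonneg_right
            (Real.rpow_le_rpow_of_nonpos hc htm.1 he0) (norm_nonneg _)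
    refine step1.trans ?_
    rw [MeasureTheory.integral_const_mul]
    refine mul_le_mul_of_nonneg_left ?_ (Real.rpow_nonneg hc.le _)
    refine (setIntegral_le_integral hfi.norm ?_).trans hint
    filter_upwards with t using norm_nonneg _
  -- lower bound on the product
  have hfac : ∀ k ∈ Finset.range j, (m/2) * (1 + |τ|) ≤ ‖s + (k:ℂ)‖ := by
    intro k hk
    rw [Finset.mem_range] at hk
    have h3 : |(s + k).re| ≤ ‖s + k‖ := Complex.abs_re_le_norm _
    have h4 : |(s + k).im| ≤ ‖s + k‖ := Complex.abs_im_le_norm _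
    have hre2 : (s + (k:ℂ)).re = -σ + k := by rw [Complex.add_re, hsre, Complex.natCast_re]
    have him2 : (s + (k:ℂ)).im = -τ := by rw [Complex.add_im, hsim, Complex.natCast_im, add_zero]
    have hk2 := hkle k hk
    have h5 : σ - k ≤ |(s + k).re| := by
      rw [hre2, abs_of_nonpos (by linarith)]; linarith
    have h6 : |τ| ≤ |(s + k).im| := by rw [him2, abs_neg]
    have hm2 : m ≤ σ - k := le_trans (min_le_left _ _) (by linarith)
    have h7 : m * |τ| ≤ |τ| := by nlinarith [abs_nonneg τ]
    nlinarith
  have hprod : ((m/2) * (1 + |τ|))^j ≤ ∏ k ∈ Finset.range j, ‖s + (k:ℂ)‖ := by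
    calc ((m/2) * (1 + |τ|))^j = ∏ _k ∈ Finset.range j, ((m/2) * (1 + |τ|)) := by
          rw [Finset.prod_const, Finset.card_range]
      _ ≤ _ := Finset.prod_le_prod (fun k _ => by positivity) hfac
  have hQ0 : (0:ℝ) < ((m/2) * (1 + |τ|))^j := by positivity
  have h8 : ((m/2) * (1 + |τ|))^j * ‖mellin φ s‖ ≤ (a*X)^e * ((X/R) ^ (1 - (j:ℝ))) :=
    calc ((m/2) * (1 + |τ|))^j * ‖mellin φ s‖
        ≤ (∏ k ∈ Finset.range j, ‖s + (k:ℂ)‖) * ‖mellin φ s‖ :=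
          mul_le_mul_of_nonneg_right hprod (norm_nonneg _)
      _ = ‖mellin f (s + j)‖ := hnorm
      _ ≤ _ := hNbound
  have h9 : ‖mellin φ s‖ ≤ (a*X)^e * ((X/R) ^ (1 - (j:ℝ))) / ((m/2) * (1 + |τ|))^j := by
    rw [le_div_iff₀ hQ0, mul_comm]
    exact h8
  refine h9.trans (le_of_eq ?_)
  have hX2 : X ^ (1-(j:ℝ)) = X ^ (-σ) * (X ^ e)⁻¹ := by
    rw [← Real.rpow_neg hX0.le, ← Real.rpow_add hX0]
    congr 1
    simp only [he_def]; ring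
  have hR2 : R ^ (1-(j:ℝ)) = (R ^ ((j:ℝ)-1))⁻¹ := by
    rw [← Real.rpow_neg hR0.le]
    congr 1; ring
  have hT2 : (1 + |τ|) ^ (-(j:ℝ)) = ((1 + |τ|)^j)⁻¹ := by
    rw [Real.rpow_neg (by positivity), Real.rpow_natCast]
  rw [Real.mul_rpow ha.le hX0.le, Real.div_rpow hX0.le hR0.le, hX2, hR2, hT2, mul_pow,
    show (2/m) = (m/2)⁻¹ by rw [inv_div], inv_pow]
  have hne1 : X ^ e ≠ 0 := (Real.rpow_pos_of_pos hX0 _).ne'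
  have hne2 : R ^ ((j:ℝ)-1) ≠ 0 := (Real.rpow_pos_of_pos hR0 _).ne'
  have hne3 : ((m/2):ℝ)^j ≠ 0 := by positivity
  have hne4 : ((1 + |τ|):ℝ)^j ≠ 0 := by positivity
  field_simp

end
end

section
/- Let p be a prime, χ a primitive Dirichlet character modulo p, and q ≥ 1 an integer with (p, q) = 1 and 1 < q < p. Let m, n be integers with (n, p) = 1. For a with (a,q) = 1 set c = bq − ap, which satisfies (c, pq) = 1 when χ̄(b) ≠ 0, and let c̄ denote the inverse of c mod pq. Then ∑_{a mod q, (a,q)=1} e(ma/q) ∑_{b mod p} χ̄(b) e(−n c̄ /(pq)) = S(m, n p̄² ; q) · χ̄(−n q̄²) · τ(χ), where p̄ is the inverse of p mod q and q̄ is the inverse of q mod p. -/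
open Complex MeasureTheory

noncomputable section

/-- `e x = exp(2πix)`. -/
def e (x : ℝ) : ℂ := Complex.exp (2 * Real.pi * Complex.I * x)

/-- The Kloosterman sum `S(m, n; q) = ∑*_{a mod q} e((ma + nā)/q)`. -/
def kloostermanS (q : ℕ) [NeZero q] (m n : ZMod q) : ℂ :=
  ∑ a : (ZMod q)ˣ,
    e ((((m * (a : ZMod q) + n * ((a⁻¹ : (ZMod q)ˣ) : ZMod q)).val : ℕ) : ℝ) / (q : ℝ))

/-- The Gauss sum `τ(χ) = ∑_{b mod p} χ(b) e(b/p)`. -/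
def gaussSumE {p : ℕ} [NeZero p] (χ : DirichletCharacter ℂ p) : ℂ :=
  ∑ b : ZMod p, χ b * e (((b.val : ℕ) : ℝ) / (p : ℝ))

lemma e_add (x y : ℝ) : e (x + y) = e x * e y := by
  rw [e, e, e, ← Complex.exp_add]
  congr 1
  push_cast
  ring

lemma e_intCast_div (N : ℕ) [NeZero N] (X : ℤ) :
    e ((X : ℝ) / (N : ℝ)) = ZMod.stdAddChar (X : ZMod N) := by
  rw [ZMod.stdAddChar_coe, e]
  congr 1
  push_cast
  ring

lemma e_val (N : ℕ) [NeZero N] (x : ZMod N) :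
    e (((x.val : ℕ) : ℝ) / (N : ℝ)) = ZMod.stdAddChar x := by
  have h := e_intCast_div N (x.val : ℤ)
  push_cast at h
  rwa [ZMod.natCast_zmod_val] at h

lemma gaussSumE_eq {p : ℕ} [NeZero p] (χ : DirichletCharacter ℂ p) :
    gaussSumE χ = gaussSum χ ZMod.stdAddChar :=
  Finset.sum_congr rfl fun b _ => by rw [e_val]

lemma stdAddChar_split (p q : ℕ) [NeZero p] [NeZero q] (u v : ℤ)
    (huv : u * p + v * q = 1) (x : ZMod (p * q)) :
    ZMod.stdAddChar x =
      ZMod.stdAddChar ((u : ZMod q) * ZMod.castHom (dvd_mul_left q p) (ZMod q) x) *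
      ZMod.stdAddChar ((v : ZMod p) * ZMod.castHom (dvd_mul_right p q) (ZMod p) x) := by
  have h1 : ((u : ZMod q) * ZMod.castHom (dvd_mul_left q p) (ZMod q) x)
      = ((u * (x.val : ℤ) : ℤ) : ZMod q) := by
    rw [ZMod.castHom_apply, ← ZMod.natCast_val]
    push_cast
    ring
  have h2 : ((v : ZMod p) * ZMod.castHom (dvd_mul_right p q) (ZMod p) x)
      = ((v * (x.val : ℤ) : ℤ) : ZMod p) := by
    rw [ZMod.castHom_apply, ← ZMod.natCast_val]
    push_cast
    ring
  rw [h1, h2, ← e_intCast_div, ← e_intCast_div, ← e_val, ← e_add]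
  congr 1
  have hp : (p : ℝ) ≠ 0 := Nat.cast_ne_zero.mpr (NeZero.ne p)
  have hq : (q : ℝ) ≠ 0 := Nat.cast_ne_zero.mpr (NeZero.ne q)
  have huv' : (u : ℝ) * p + v * q = 1 := by exact_mod_cast congrArg (Int.cast : ℤ → ℝ) huv
  push_cast
  field_simp
  linear_combination (-((x.val : ℕ) : ℝ)) * huv'


lemma key_exp (p q : ℕ) [NeZero p] [NeZero q] (u v n : ℤ)
    (huv : u * (p : ℤ) + v * (q : ℤ) = 1)
    (a : (ZMod q)ˣ) (b : ZMod p) (hb : IsUnit b) :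
    e (((-(n * (((((b.val : ℤ) * (q : ℤ) - ((a : ZMod q).val : ℤ) * (p : ℤ) : ℤ) :
        ZMod (p * q))⁻¹).val : ℤ)) : ℤ) : ℝ) / ((p * q : ℕ) : ℝ)) =
      ZMod.stdAddChar ((n : ZMod q) * ((p : ZMod q)⁻¹) ^ 2 * ((a⁻¹ : (ZMod q)ˣ) : ZMod q)) *
      ZMod.stdAddChar (((-n : ℤ) : ZMod p) * ((q : ZMod p)⁻¹) ^ 2 * b⁻¹) := by
  have hpu1 : (p : ZMod q) * (u : ZMod q) = 1 := by
    have h := congrArg (Int.cast : ℤ → ZMod q) huv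
    push_cast at h
    rw [ZMod.natCast_self q] at h
    rw [mul_comm]
    linear_combination h
  have hqv1 : (q : ZMod p) * (v : ZMod p) = 1 := by
    have h := congrArg (Int.cast : ℤ → ZMod p) huv
    push_cast at h
    rw [ZMod.natCast_self p] at h
    rw [mul_comm]
    linear_combination h
  have hpu : IsUnit (p : ZMod q) := IsUnit.of_mul_eq_one _ hpu1
  have hqu : IsUnit (q : ZMod p) := IsUnit.of_mul_eq_one _ hqv1
  have hu_eq : (u : ZMod q) = (p : ZMod q)⁻¹ :=
    (ZMod.inv_eq_of_mul_eq_one q _ _ hpu1).symm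
  have hv_eq : (v : ZMod p) = (q : ZMod p)⁻¹ :=
    (ZMod.inv_eq_of_mul_eq_one p _ _ hqv1).symm
  set C : ℤ := (b.val : ℤ) * (q : ℤ) - ((a : ZMod q).val : ℤ) * (p : ℤ) with hCdef
  set c : ZMod (p * q) := (C : ZMod (p * q)) with hcdef
  set f := ZMod.castHom (dvd_mul_left q p) (ZMod q) with hfdef
  set g := ZMod.castHom (dvd_mul_right p q) (ZMod p) with hgdef
  have hfc : f c = -((a : ZMod q) * (p : ZMod q)) := by
    rw [hcdef, map_intCast, hCdef]
    push_cast
    rw [ZMod.natCast_self, ZMod.natCast_zmod_val]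
    ring
  have hgc : g c = b * (q : ZMod p) := by
    rw [hcdef, map_intCast, hCdef]
    push_cast
    rw [ZMod.natCast_self, ZMod.natCast_zmod_val]
    ring
  have hfcu : IsUnit (f c) := by
    rw [hfc]; exact (a.isUnit.mul hpu).neg
  have hgcu : IsUnit (g c) := by
    rw [hgc]; exact hb.mul hqu
  have hcu : IsUnit c := by
    rw [← ZMod.natCast_zmod_val c, ZMod.isUnit_iff_coprime]
    apply Nat.Coprime.mul_right
    · rw [← ZMod.isUnit_iff_coprime]
      have h : ((c.val : ℕ) : ZMod p) = g c := by
        rw [hgdef, ZMod.castHom_apply, ZMod.natCast_val]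
      rw [h]; exact hgcu
    · rw [← ZMod.isUnit_iff_coprime]
      have h : ((c.val : ℕ) : ZMod q) = f c := by
        rw [hfdef, ZMod.castHom_apply, ZMod.natCast_val]
      rw [h]; exact hfcu
  have hfinv : f (c⁻¹) = (f c)⁻¹ :=
    (ZMod.inv_eq_of_mul_eq_one q _ _
      (by rw [← map_mul, ZMod.mul_inv_of_unit c hcu, map_one])).symm
  have hginv : g (c⁻¹) = (g c)⁻¹ :=
    (ZMod.inv_eq_of_mul_eq_one p _ _
      (by rw [← map_mul, ZMod.mul_inv_of_unit c hcu, map_one])).symm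
  have hfinv_val : (f c)⁻¹ = -(((a⁻¹ : (ZMod q)ˣ) : ZMod q) * (p : ZMod q)⁻¹) := by
    apply ZMod.inv_eq_of_mul_eq_one
    rw [hfc]
    have h1 : (a : ZMod q) * ((a⁻¹ : (ZMod q)ˣ) : ZMod q) = 1 := a.mul_inv
    have h2 : (p : ZMod q) * (p : ZMod q)⁻¹ = 1 := ZMod.mul_inv_of_unit _ hpu
    calc -((a : ZMod q) * (p : ZMod q)) * -(((a⁻¹ : (ZMod q)ˣ) : ZMod q) * (p : ZMod q)⁻¹)
        = ((a : ZMod q) * ((a⁻¹ : (ZMod q)ˣ) : ZMod q)) * ((p : ZMod q) * (p : ZMod q)⁻¹) := by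
          ring
      _ = 1 := by rw [h1, h2, one_mul]
  have hginv_val : (g c)⁻¹ = b⁻¹ * (q : ZMod p)⁻¹ := by
    apply ZMod.inv_eq_of_mul_eq_one
    rw [hgc]
    have h1 : b * b⁻¹ = 1 := ZMod.mul_inv_of_unit b hb
    have h2 : (q : ZMod p) * (q : ZMod p)⁻¹ = 1 := ZMod.mul_inv_of_unit _ hqu
    calc (b * (q : ZMod p)) * (b⁻¹ * (q : ZMod p)⁻¹)
        = (b * b⁻¹) * ((q : ZMod p) * (q : ZMod p)⁻¹) := by ring
      _ = 1 := by rw [h1, h2, one_mul]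
  have hY : ((-(n * ((c⁻¹).val : ℤ)) : ℤ) : ZMod (p * q)) = -(n * c⁻¹) := by
    push_cast
    rw [ZMod.natCast_val, ZMod.cast_id]
  rw [e_intCast_div (p * q), hY, stdAddChar_split p q u v huv]
  congr 1
  · congr 1
    have h : f (-(n * c⁻¹)) =
        (n : ZMod q) * ((a⁻¹ : (ZMod q)ˣ) : ZMod q) * (p : ZMod q)⁻¹ := by
      rw [map_neg, map_mul, map_intCast, hfinv, hfinv_val]
      ring
    calc (u : ZMod q) * ZMod.castHom (dvd_mul_left q p) (ZMod q) (-(n * c⁻¹))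
        = (u : ZMod q) * f (-(n * c⁻¹)) := rfl
      _ = _ := by rw [h, hu_eq]; ring
  · congr 1
    have h : g (-(n * c⁻¹)) = -((n : ZMod p) * (b⁻¹ * (q : ZMod p)⁻¹)) := by
      rw [map_neg, map_mul, map_intCast, hginv, hginv_val]
    calc (v : ZMod p) * ZMod.castHom (dvd_mul_right p q) (ZMod p) (-(n * c⁻¹))
        = (v : ZMod p) * g (-(n * c⁻¹)) := rfl
      _ = _ := by rw [h, hv_eq]; push_cast; ring

/-- **Evaluation of the character sum `𝒞`.** -/
theorem statement9 (p : ℕ) [NeZero p] (hp : p.Prime)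
    (χ : DirichletCharacter ℂ p) (hχ : χ.IsPrimitive)
    (q : ℕ) [NeZero q] (hq1 : 1 < q) (hqp : q < p) (hpq : Nat.Coprime p q)
    (m n : ℤ) (hn : IsCoprime n (p : ℤ)) :
    (∑ a : (ZMod q)ˣ,
        e (((m * ((a : ZMod q).val : ℤ) : ℤ) : ℝ) / (q : ℝ)) *
          ∑ b : ZMod p, (starRingEnd ℂ) (χ b) *
            e (((-(n * (((((b.val : ℤ) * (q : ℤ) - ((a : ZMod q).val : ℤ) * (p : ℤ) : ℤ) :
                ZMod (p * q))⁻¹).val : ℤ)) : ℤ) : ℝ) / ((p * q : ℕ) : ℝ))) =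
      kloostermanS q (m : ZMod q) ((n : ZMod q) * ((p : ZMod q)⁻¹) ^ 2) *
        ((starRingEnd ℂ) (χ (((-n : ℤ) : ZMod p) * ((q : ZMod p)⁻¹) ^ 2))) *
        gaussSumE χ := by
  haveI : Fact p.Prime := ⟨hp⟩
  obtain ⟨u, v, huv⟩ : ∃ u v : ℤ, u * (p : ℤ) + v * (q : ℤ) = 1 :=
    Nat.isCoprime_iff_coprime.mpr hpq
  have hqv1 : (q : ZMod p) * (v : ZMod p) = 1 := by
    have h := congrArg (Int.cast : ℤ → ZMod p) huv
    push_cast at h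
    rw [ZMod.natCast_self p] at h
    rw [mul_comm]
    linear_combination h
  have hqu : IsUnit (q : ZMod p) := IsUnit.of_mul_eq_one _ hqv1
  have hqiu : IsUnit ((q : ZMod p)⁻¹) :=
    IsUnit.of_mul_eq_one _ (ZMod.inv_mul_of_unit _ hqu)
  have hnu : IsUnit (n : ZMod p) := by
    obtain ⟨r, s, hrs⟩ := hn
    refine IsUnit.of_mul_eq_one (r : ZMod p) ?_
    have h := congrArg (Int.cast : ℤ → ZMod p) hrs
    push_cast at h
    rw [ZMod.natCast_self p] at h
    rw [mul_comm]
    linear_combination h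
  have hwu : IsUnit (((-n : ℤ) : ZMod p) * ((q : ZMod p)⁻¹) ^ 2) := by
    refine IsUnit.mul ?_ (hqiu.pow 2)
    push_cast
    exact hnu.neg
  have hconj : ∀ x : ZMod p, (starRingEnd ℂ) (χ x) = χ x⁻¹ := by
    intro x
    rw [starRingEnd_apply, MulChar.star_apply' χ x, MulChar.inv_apply']
  have hT : ∑ b : ZMod p, (starRingEnd ℂ) (χ b) *
        ZMod.stdAddChar ((((-n : ℤ) : ZMod p) * ((q : ZMod p)⁻¹) ^ 2) * b⁻¹)
      = (starRingEnd ℂ) (χ (((-n : ℤ) : ZMod p) * ((q : ZMod p)⁻¹) ^ 2)) * gaussSumE χ := by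
    simp only [hconj]
    have h2 : ∑ b : ZMod p, χ b⁻¹ *
          ZMod.stdAddChar ((((-n : ℤ) : ZMod p) * ((q : ZMod p)⁻¹) ^ 2) * b⁻¹)
        = ∑ b : ZMod p, χ b *
          ZMod.stdAddChar ((((-n : ℤ) : ZMod p) * ((q : ZMod p)⁻¹) ^ 2) * b) := by
      rw [← Equiv.sum_comp (Equiv.inv (ZMod p)) (fun b => χ b *
          ZMod.stdAddChar ((((-n : ℤ) : ZMod p) * ((q : ZMod p)⁻¹) ^ 2) * b))]
      simp
    rw [h2]
    have h3 := gaussSum_mulShift χ ZMod.stdAddChar hwu.unit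
    rw [IsUnit.unit_spec] at h3
    have hne : χ (((-n : ℤ) : ZMod p) * ((q : ZMod p)⁻¹) ^ 2) ≠ 0 := (hwu.map χ).ne_zero
    have h4 : ∑ b : ZMod p, χ b *
          ZMod.stdAddChar ((((-n : ℤ) : ZMod p) * ((q : ZMod p)⁻¹) ^ 2) * b)
        = gaussSum χ (ZMod.stdAddChar.mulShift
            (((-n : ℤ) : ZMod p) * ((q : ZMod p)⁻¹) ^ 2)) := by
      simp [gaussSum, AddChar.mulShift_apply]
    rw [h4, ← MulChar.inv_apply', MulChar.inv_apply_eq_inv', gaussSumE_eq, ← h3,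
      inv_mul_cancel_left₀ hne]
  have houter : ∀ a : (ZMod q)ˣ,
      e (((m * ((a : ZMod q).val : ℤ) : ℤ) : ℝ) / (q : ℝ)) =
        ZMod.stdAddChar ((m : ZMod q) * (a : ZMod q)) := by
    intro a
    rw [e_intCast_div q]
    congr 1
    push_cast
    rw [ZMod.natCast_val, ZMod.cast_id]
  have hinner : ∀ a : (ZMod q)ˣ,
      (∑ b : ZMod p, (starRingEnd ℂ) (χ b) *
          e (((-(n * (((((b.val : ℤ) * (q : ℤ) - ((a : ZMod q).val : ℤ) * (p : ℤ) : ℤ) :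
              ZMod (p * q))⁻¹).val : ℤ)) : ℤ) : ℝ) / ((p * q : ℕ) : ℝ))) =
        ZMod.stdAddChar ((n : ZMod q) * ((p : ZMod q)⁻¹) ^ 2 * ((a⁻¹ : (ZMod q)ˣ) : ZMod q)) *
          ((starRingEnd ℂ) (χ (((-n : ℤ) : ZMod p) * ((q : ZMod p)⁻¹) ^ 2)) * gaussSumE χ) := by
    intro a
    rw [← hT, Finset.mul_sum]
    refine Finset.sum_congr rfl fun b _ => ?_
    by_cases hb : IsUnit b
    · rw [key_exp p q u v n huv a b hb]
      ring
    · rw [MulChar.map_nonunit χ hb]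
      simp
  trans (∑ a : (ZMod q)ˣ, ZMod.stdAddChar ((m : ZMod q) * (a : ZMod q)) *
        ZMod.stdAddChar ((n : ZMod q) * ((p : ZMod q)⁻¹) ^ 2 * ((a⁻¹ : (ZMod q)ˣ) : ZMod q))) *
        ((starRingEnd ℂ) (χ (((-n : ℤ) : ZMod p) * ((q : ZMod p)⁻¹) ^ 2)) * gaussSumE χ)
  · rw [Finset.sum_mul]
    refine Finset.sum_congr rfl fun a _ => ?_
    rw [houter a, hinner a]
    ring
  · have hK : (∑ a : (ZMod q)ˣ, ZMod.stdAddChar ((m : ZMod q) * (a : ZMod q)) *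
        ZMod.stdAddChar ((n : ZMod q) * ((p : ZMod q)⁻¹) ^ 2 * ((a⁻¹ : (ZMod q)ˣ) : ZMod q)))
        = kloostermanS q (m : ZMod q) ((n : ZMod q) * ((p : ZMod q)⁻¹) ^ 2) := by
      unfold kloostermanS
      refine Finset.sum_congr rfl fun a _ => ?_
      rw [e_val, AddChar.map_add_eq_mul]
    rw [hK]
    ring

end
end
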